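/- Under the hypotheses of the optimality theorem for the relaxation (R) — namely, U* ⊆ {1,…,M} with |U*| = m ≥ 1 and V* ⊆ {1,…,N} with |V*| = n ≥ 1 with characteristic vectors ū, v̄, U* × V* ⊆ E, and there exist W ∈ R^{M×N}, λ ∈ R^{M×N}, μ ≥ 0 with W v̄ = 0, ūᵀ W = 0, ‖W‖ ≤ 1, and ū v̄ᵀ/√(mn) + W = μ e eᵀ + Σ_{(i,j)∈Ẽ} λ_{ij} e_i e_jᵀ — the following holds: for every pair of sets I ⊆ {1,…,M} and J ⊆ {1,…,N} with I × J ⊆ E, one has |I|·|J| ≤ mn. -/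

import Mathlib

/-!
Put `u = 1_{U*} / √m` and `v = 1_{V*} / √n`. Since `W v = 0` and `uᵀ W = 0`, the matrix
`Z = u vᵀ + W` maps `span v` to `span u` and `v⊥` to `u⊥` with norm at most one on each, so
`|xᵀ Z y| ≤ ‖x‖ ‖y‖`. The dual equation says `Z = μ e eᵀ + Λ` with `Λ` supported off `E`.
Testing it against `1_{U*}, 1_{V*}` gives `μ = 1 / √(mn)`; testing it against the characteristic
vectors of a biclique `I × J` gives `|I| |J| / √(mn) = 1_Iᵀ Z 1_J ≤ √(|I| |J|)`.
-/

open Matrix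

/-- The spectral norm (largest singular value) of a real matrix. -/
noncomputable def matSpectralNorm {m n : Type*} [Fintype m] [Fintype n] [DecidableEq n]
    (A : Matrix m n ℝ) : ℝ :=
  ‖LinearMap.toContinuousLinearMap (Matrix.toEuclideanLin A)‖

/-- The nuclear norm (sum of singular values) of a real matrix. -/
noncomputable def nuclearNorm {m n : Type*} [Fintype m] [Fintype n] [DecidableEq n]
    (A : Matrix m n ℝ) : ℝ :=
  ∑ j, Real.sqrt ((Matrix.isHermitian_conjTranspose_mul_self A).eigenvalues j)

/-- The characteristic vector of a finite set of indices. -/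
def charVec {ι : Type*} [DecidableEq ι] (S : Finset ι) : ι → ℝ :=
  fun i => if i ∈ S then 1 else 0

/-- Feasibility for the relaxation (R): `∑_{i,j} X_{ij} ≥ mn` and `X_{ij} = 0` for all
`(i,j)` in the complement of `E`. -/
def FeasR {M N : ℕ} (E : Set (Fin M × Fin N)) (m n : ℕ)
    (X : Matrix (Fin M) (Fin N) ℝ) : Prop :=
  (m : ℝ) * n ≤ (∑ i, ∑ j, X i j) ∧ ∀ i j, (i, j) ∉ E → X i j = 0

theorem abs_mul_add_le_sqrt_mul_sqrt {a b t p q : ℝ} (hp : 0 ≤ p) (hq : 0 ≤ q)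
    (ht : |t| ≤ √p * √q) : |a * b + t| ≤ √(a ^ 2 + p) * √(b ^ 2 + q) := by
  rw [← Real.sqrt_mul (by positivity)]
  apply Real.abs_le_sqrt
  have hp' := Real.sq_sqrt hp
  have hq' := Real.sq_sqrt hq
  have hamgm : 2 * (|a| * |b|) * (√p * √q) ≤ a ^ 2 * q + b ^ 2 * p := by
    nlinarith [sq_nonneg (|a| * √q - |b| * √p), sq_abs a, sq_abs b]
  have htri : |a * b + t| ≤ |a| * |b| + √p * √q :=
    calc |a * b + t| ≤ |a * b| + |t| := abs_add_le _ _
      _ ≤ |a| * |b| + √p * √q := by rw [abs_mul]; gcongr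
  calc (a * b + t) ^ 2 = |a * b + t| ^ 2 := (sq_abs _).symm
    _ ≤ (|a| * |b| + √p * √q) ^ 2 := by gcongr
    _ ≤ (a ^ 2 + p) * (b ^ 2 + q) := by nlinarith [sq_abs a, sq_abs b]

theorem le_of_inv_sqrt_mul_le_sqrt {p q : ℝ} (hp : 0 ≤ p) (hq : 0 < q) (h : (√q)⁻¹ * p ≤ √p) :
    p ≤ q := by
  have h' : √p * √p ≤ √q * √p := by
    rwa [Real.mul_self_sqrt hp, ← inv_mul_le_iff₀ (Real.sqrt_pos.2 hq)]
  have : √p ≤ √q := by nlinarith [Real.sqrt_nonneg p, Real.sqrt_nonneg q]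
  exact (Real.sqrt_le_sqrt_iff hq.le).1 this

section
variable {ι κ : Type*} [Fintype ι] [Fintype κ]

theorem abs_dotProduct_mulVec_le [DecidableEq κ] (A : Matrix ι κ ℝ) (x : ι → ℝ) (y : κ → ℝ) :
    |x ⬝ᵥ (A *ᵥ y)| ≤ matSpectralNorm A * √(x ⬝ᵥ x) * √(y ⬝ᵥ y) := by
  have hx : ‖WithLp.toLp 2 x‖ = √(x ⬝ᵥ x) := norm_eq_sqrt_real_inner _
  have hy : ‖WithLp.toLp 2 y‖ = √(y ⬝ᵥ y) := norm_eq_sqrt_real_inner _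
  have hAy : ‖toEuclideanLin A (WithLp.toLp 2 y)‖ ≤ matSpectralNorm A * ‖WithLp.toLp 2 y‖ :=
    (LinearMap.toContinuousLinearMap (toEuclideanLin A)).le_opNorm _
  calc |x ⬝ᵥ (A *ᵥ y)| = |inner ℝ (WithLp.toLp 2 x) (toEuclideanLin A (WithLp.toLp 2 y))| := by
        rw [dotProduct_comm]; rfl
    _ ≤ ‖WithLp.toLp 2 x‖ * ‖toEuclideanLin A (WithLp.toLp 2 y)‖ := abs_real_inner_le_norm _ _
    _ ≤ ‖WithLp.toLp 2 x‖ * (matSpectralNorm A * ‖WithLp.toLp 2 y‖) := by gcongr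
    _ = matSpectralNorm A * √(x ⬝ᵥ x) * √(y ⬝ᵥ y) := by rw [hx, hy]; ring

theorem dotProduct_vecMulVec_mulVec (x u : ι → ℝ) (v y : κ → ℝ) :
    x ⬝ᵥ (vecMulVec u v *ᵥ y) = (x ⬝ᵥ u) * (v ⬝ᵥ y) := by
  rw [vecMulVec_mulVec, op_smul_eq_smul, dotProduct_smul, smul_eq_mul, mul_comm]

theorem dotProduct_self_eq_sq_add_of_unit {u : ι → ℝ} (hu : u ⬝ᵥ u = 1) (x : ι → ℝ) :
    x ⬝ᵥ x = (x ⬝ᵥ u) ^ 2 + (x - (x ⬝ᵥ u) • u) ⬝ᵥ (x - (x ⬝ᵥ u) • u) := by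
  simp only [sub_dotProduct, dotProduct_sub, smul_dotProduct, dotProduct_smul, hu,
    dotProduct_comm u x, smul_eq_mul]
  ring

theorem abs_dotProduct_vecMulVec_add_mulVec_le [DecidableEq κ] {u : ι → ℝ} {v : κ → ℝ}
    {W : Matrix ι κ ℝ} (hu : u ⬝ᵥ u = 1) (hv : v ⬝ᵥ v = 1) (hWv : W *ᵥ v = 0)
    (hWu : u ᵥ* W = 0) (hW : matSpectralNorm W ≤ 1) (x : ι → ℝ) (y : κ → ℝ) :
    |x ⬝ᵥ ((vecMulVec u v + W) *ᵥ y)| ≤ √(x ⬝ᵥ x) * √(y ⬝ᵥ y) := by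
  set x' := x - (x ⬝ᵥ u) • u
  set y' := y - (y ⬝ᵥ v) • v
  have hsplit : x ⬝ᵥ ((vecMulVec u v + W) *ᵥ y) = (x ⬝ᵥ u) * (y ⬝ᵥ v) + x' ⬝ᵥ (W *ᵥ y') := by
    simp only [x', y', add_mulVec, dotProduct_add, dotProduct_vecMulVec_mulVec, mulVec_sub,
      mulVec_smul, hWv, smul_zero, sub_zero, sub_dotProduct, smul_dotProduct,
      dotProduct_mulVec u, hWu, zero_dotProduct, dotProduct_comm v y]
  have hW' : |x' ⬝ᵥ (W *ᵥ y')| ≤ √(x' ⬝ᵥ x') * √(y' ⬝ᵥ y') :=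
    (abs_dotProduct_mulVec_le W x' y').trans
      (by rw [mul_assoc]; exact mul_le_of_le_one_left (by positivity) hW)
  rw [hsplit, dotProduct_self_eq_sq_add_of_unit hu x, dotProduct_self_eq_sq_add_of_unit hv y]
  exact abs_mul_add_le_sqrt_mul_sqrt (dotProduct_self_star_nonneg x')
    (dotProduct_self_star_nonneg y') hW'

theorem charVec_dotProduct [DecidableEq ι] (S : Finset ι) (x : ι → ℝ) :
    charVec S ⬝ᵥ x = ∑ i ∈ S, x i := by
  simp [charVec, dotProduct, Finset.sum_ite_mem]

theorem charVec_dotProduct_self [DecidableEq ι] (S : Finset ι) :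
    charVec S ⬝ᵥ charVec S = S.card := by
  rw [charVec_dotProduct]
  simp +contextual [charVec]

theorem dotProduct_self_inv_sqrt_card_smul_charVec [DecidableEq ι] {S : Finset ι}
    (hS : S.Nonempty) : ((√S.card)⁻¹ • charVec S) ⬝ᵥ ((√S.card)⁻¹ • charVec S) = 1 := by
  have hpos : (0 : ℝ) < S.card := by exact_mod_cast hS.card_pos
  rw [smul_dotProduct, dotProduct_smul, charVec_dotProduct_self, smul_eq_mul, smul_eq_mul,
    ← mul_assoc, ← mul_inv, Real.mul_self_sqrt hpos.le, inv_mul_cancel₀ hpos.ne']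

theorem charVec_dotProduct_mulVec_charVec [DecidableEq ι] [DecidableEq κ] (A : Matrix ι κ ℝ)
    (I : Finset ι) (J : Finset κ) :
    charVec I ⬝ᵥ (A *ᵥ charVec J) = ∑ i ∈ I, ∑ j ∈ J, A i j := by
  simp only [charVec_dotProduct, mulVec, dotProduct_comm (A _), charVec_dotProduct]

theorem charVec_dotProduct_const_add_mulVec_charVec [DecidableEq ι] [DecidableEq κ]
    {E : Set (ι × κ)} {Λ : Matrix ι κ ℝ} (hΛ : ∀ i j, (i, j) ∈ E → Λ i j = 0) (μ : ℝ)
    {I : Finset ι} {J : Finset κ} (hIJ : ∀ i ∈ I, ∀ j ∈ J, (i, j) ∈ E) :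
    charVec I ⬝ᵥ ((μ • of (fun _ _ => (1 : ℝ)) + Λ) *ᵥ charVec J) = μ * (I.card * J.card) := by
  rw [charVec_dotProduct_mulVec_charVec]
  simp +contextual only [smul_of, Matrix.add_apply, of_apply, Pi.smul_apply, smul_eq_mul,
    mul_one, hIJ, hΛ, add_zero, Finset.sum_const, nsmul_eq_mul]
  ring

end

theorem relaxation_max_biclique_bound_general
    (M N m n : ℕ) (hm : 1 ≤ m) (hn : 1 ≤ n)
    (E : Set (Fin M × Fin N))
    (Ustar : Finset (Fin M)) (Vstar : Finset (Fin N))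
    (hUm : Ustar.card = m) (hVn : Vstar.card = n)
    (hfeas : ∀ i ∈ Ustar, ∀ j ∈ Vstar, (i, j) ∈ E)
    (W Λ : Matrix (Fin M) (Fin N) ℝ) (μ : ℝ)
    (hWv : W *ᵥ charVec Vstar = 0)
    (hWu : charVec Ustar ᵥ* W = 0)
    (hWnorm : matSpectralNorm W ≤ 1)
    (hΛ : ∀ i j, (i, j) ∈ E → Λ i j = 0)
    (heq : (Real.sqrt ((m : ℝ) * n))⁻¹ • vecMulVec (charVec Ustar) (charVec Vstar) + W
         = μ • Matrix.of (fun _ _ => (1 : ℝ)) + Λ) :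
    ∀ (I : Finset (Fin M)) (J : Finset (Fin N)),
      (∀ i ∈ I, ∀ j ∈ J, (i, j) ∈ E) → I.card * J.card ≤ m * n := by
  subst hUm hVn
  set c := (√((Ustar.card : ℝ) * Vstar.card))⁻¹
  have hZ : c • vecMulVec (charVec Ustar) (charVec Vstar) =
      vecMulVec ((√(Ustar.card : ℝ))⁻¹ • charVec Ustar)
        ((√(Vstar.card : ℝ))⁻¹ • charVec Vstar) := by
    rw [smul_vecMulVec, vecMulVec_smul, smul_smul, ← mul_inv, ← Real.sqrt_mul (Nat.cast_nonneg _)]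
  have hμ : μ = c := by
    have h := charVec_dotProduct_const_add_mulVec_charVec hΛ μ hfeas
    rw [← heq, add_mulVec, dotProduct_add, smul_mulVec, dotProduct_smul,
      dotProduct_vecMulVec_mulVec, dotProduct_mulVec, hWu, zero_dotProduct,
      charVec_dotProduct_self, charVec_dotProduct_self, smul_eq_mul, add_zero] at h
    have hUV : (0 : ℝ) < Ustar.card * Vstar.card := by positivity
    exact (mul_right_cancel₀ hUV.ne' h).symm
  intro I J hIJ
  have hbound := abs_dotProduct_vecMulVec_add_mulVec_le
    (dotProduct_self_inv_sqrt_card_smul_charVec (Finset.card_pos.1 hm))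
    (dotProduct_self_inv_sqrt_card_smul_charVec (Finset.card_pos.1 hn))
    (by rw [mulVec_smul, hWv, smul_zero]) (by rw [smul_vecMul, hWu, smul_zero]) hWnorm
    (charVec I) (charVec J)
  rw [← hZ, heq, charVec_dotProduct_const_add_mulVec_charVec hΛ μ hIJ, hμ,
    charVec_dotProduct_self, charVec_dotProduct_self, ← Real.sqrt_mul (Nat.cast_nonneg _)]
    at hbound
  exact_mod_cast le_of_inv_sqrt_mul_le_sqrt (by positivity) (by positivity) (le_of_abs_le hbound)

/-- under the hypotheses of the optimality theorem for the relaxation (R),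
every pair `I ⊆ {1,…,M}`, `J ⊆ {1,…,N}` with `I × J ⊆ E` satisfies `|I|·|J| ≤ mn`. -/
theorem relaxation_max_biclique_bound
    (M N m n : ℕ) (hm : 1 ≤ m) (hn : 1 ≤ n)
    (E : Set (Fin M × Fin N))
    (Ustar : Finset (Fin M)) (Vstar : Finset (Fin N))
    (hUm : Ustar.card = m) (hVn : Vstar.card = n)
    (hfeas : ∀ i ∈ Ustar, ∀ j ∈ Vstar, (i, j) ∈ E)
    (W Λ : Matrix (Fin M) (Fin N) ℝ) (μ : ℝ) (hμ : 0 ≤ μ)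
    (hWv : W *ᵥ charVec Vstar = 0)
    (hWu : charVec Ustar ᵥ* W = 0)
    (hWnorm : matSpectralNorm W ≤ 1)
    (hΛ : ∀ i j, (i, j) ∈ E → Λ i j = 0)
    (heq : (Real.sqrt ((m : ℝ) * n))⁻¹ • vecMulVec (charVec Ustar) (charVec Vstar) + W
         = μ • Matrix.of (fun _ _ => (1 : ℝ)) + Λ) :
    ∀ (I : Finset (Fin M)) (J : Finset (Fin N)),
      (∀ i ∈ I, ∀ j ∈ J, (i, j) ∈ E) → I.card * J.card ≤ m * n :=
  relaxation_max_biclique_bound_general M N m n hm hn E Ustar Vstar hUm hVn hfeas W Λ μ hWv hWu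
    hWnorm hΛ heq
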